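/- Let a : ℝ → ℝ be a C^∞ function with a(s) = 0 for all s ≤ 0 and a(s) > 0 for all s > 0. Then the Cairns–Ghys perturbed action is not smoothly linearizable at the origin: there is no pair (U, φ) with U an open neighbourhood of 0 in ℝ³ and φ : U → ℝ³ a C^∞ map with φ(0) = 0 and Dφ(p) a linear isomorphism for every p ∈ U, such that Dφ(p)(X̃(p)) = X(φ(p)), Dφ(p)(Ỹ(p)) = Y(φ(p)), and Dφ(p)(Z̃(p)) = Z(φ(p)) for all p ∈ U. -/
import Mathlib


noncomputable section

/-- The linear vector field `X(x,y,z) = (0,z,y)` on `ℝ³`. -/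
def Xf (p : Fin 3 → ℝ) : Fin 3 → ℝ := ![0, p 2, p 1]

/-- The linear vector field `Y(x,y,z) = (z,0,x)` on `ℝ³`. -/
def Yf (p : Fin 3 → ℝ) : Fin 3 → ℝ := ![p 2, 0, p 0]

/-- The linear vector field `Z(x,y,z) = (−y,x,0)` on `ℝ³`. -/
def Zf (p : Fin 3 → ℝ) : Fin 3 → ℝ := ![-p 1, p 0, 0]

/-- The Lie bracket of vector fields: `[V,W](p) = DW(p)(V(p)) − DV(p)(W(p))`. -/
def lieBr (V W : (Fin 3 → ℝ) → (Fin 3 → ℝ)) (p : Fin 3 → ℝ) : Fin 3 → ℝ :=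
  fderiv ℝ W p (V p) - fderiv ℝ V p (W p)

/-- The radial vector field `R(x,y,z) = (x,y,z)`. -/
def Rf (p : Fin 3 → ℝ) : Fin 3 → ℝ := p

/-- The quadratic form `x² + y² − z²`. -/
def Qf (p : Fin 3 → ℝ) : ℝ := (p 0) ^ 2 + (p 1) ^ 2 - (p 2) ^ 2

/-- `A(x,y,z) = a(x²+y²−z²)/(x²+y²)` when `x²+y² ≠ 0`, and `0` when `x²+y² = 0`. -/
def Afun (a : ℝ → ℝ) (p : Fin 3 → ℝ) : ℝ :=
  if (p 0) ^ 2 + (p 1) ^ 2 = 0 then 0 else a (Qf p) / ((p 0) ^ 2 + (p 1) ^ 2)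

/-- `f = x·A`. -/
def ff (a : ℝ → ℝ) (p : Fin 3 → ℝ) : ℝ := p 0 * Afun a p

/-- `g = −y·A`. -/
def gf (a : ℝ → ℝ) (p : Fin 3 → ℝ) : ℝ := -p 1 * Afun a p

/-- The Cairns–Ghys perturbed field `X̃ = X + f·R`. -/
def Xt (a : ℝ → ℝ) (p : Fin 3 → ℝ) : Fin 3 → ℝ := Xf p + ff a p • Rf p

/-- The Cairns–Ghys perturbed field `Ỹ = Y + g·R`. -/
def Yt (a : ℝ → ℝ) (p : Fin 3 → ℝ) : Fin 3 → ℝ := Yf p + gf a p • Rf p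

/-- The Cairns–Ghys perturbed field `Z̃ = Z`. -/
def Zt (p : Fin 3 → ℝ) : Fin 3 → ℝ := Zf p

/-- **Non-linearizability of the Cairns–Ghys action.** If `a` is `C^∞`, vanishes on
`(−∞,0]` and is strictly positive on `(0,∞)`, then there is no local `C^∞`
diffeomorphism `φ` of a neighbourhood of `0 ∈ ℝ³`, fixing `0`, that conjugates the
perturbed fields `X̃, Ỹ, Z̃` to their linear parts `X, Y, Z`. -/
theorem cairnsGhys_not_linearizable
    (a : ℝ → ℝ) (ha : ContDiff ℝ (⊤ : ℕ∞) a)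
    (ha0 : ∀ s : ℝ, s ≤ 0 → a s = 0) (hapos : ∀ s : ℝ, 0 < s → 0 < a s) :
    ¬ ∃ (U : Set (Fin 3 → ℝ)) (φ : (Fin 3 → ℝ) → (Fin 3 → ℝ)),
        IsOpen U ∧ (0 : Fin 3 → ℝ) ∈ U ∧
        ContDiffOn ℝ (⊤ : ℕ∞) φ U ∧ φ 0 = 0 ∧
        (∀ p ∈ U, Function.Bijective (fderiv ℝ φ p)) ∧
        (∀ p ∈ U,
          fderiv ℝ φ p (Xt a p) = Xf (φ p) ∧
          fderiv ℝ φ p (Yt a p) = Yf (φ p) ∧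
          fderiv ℝ φ p (Zt p) = Zf (φ p)) := by
  rintro ⟨U, φ, hU, h0U, hφ, hφ0, hbij, hconj⟩
  obtain ⟨ε, hε, hball⟩ := Metric.isOpen_iff.1 hU 0 h0U
  set t : ℝ := ε / 2 with htdef
  have ht : 0 < t := by positivity
  set p : Fin 3 → ℝ := ![t, 0, 0] with hpdef
  have hp0 : p 0 = t := rfl
  have hp1 : p 1 = 0 := rfl
  have hp2 : p 2 = 0 := rfl
  have hpU : p ∈ U := by
    apply hball
    rw [Metric.mem_ball, dist_zero_right, pi_norm_lt_iff hε]
    intro i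
    fin_cases i
    · show ‖p 0‖ < ε
      rw [hp0, Real.norm_eq_abs, abs_of_pos ht]; linarith
    · show ‖p 1‖ < ε
      rw [hp1]; simpa using hε
    · show ‖p 2‖ < ε
      rw [hp2]; simpa using hε
  have ha' : 0 < a (t ^ 2) := hapos _ (by positivity)
  have hA : Afun a p = a (t ^ 2) / t ^ 2 := by
    unfold Afun Qf
    rw [hp0, hp1, hp2, if_neg (by intro h; nlinarith)]
    norm_num
  have hXt : Xt a p = ![a (t ^ 2), 0, 0] := by
    unfold Xt Xf ff Rf
    rw [hA]
    funext i
    fin_cases i <;>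
      simp [hpdef, hp0, hp1, hp2] <;> field_simp <;> ring
  have hYt : Yt a p = ![0, 0, t] := by
    unfold Yt Yf gf Rf
    funext i
    fin_cases i <;> simp [hpdef, hp0, hp1, hp2]
  have hZt : Zt p = ![0, t, 0] := by
    unfold Zt Zf
    funext i
    fin_cases i <;> simp [hpdef, hp0, hp1, hp2]
  obtain ⟨hX, hY, hZ⟩ := hconj p hpU
  have hinj := (hbij p hpU).injective
  set L := fderiv ℝ φ p with hL
  set q := φ p with hq
  -- the linear fields satisfy the universal relation x·X − y·Y − z·Z = 0
  have key : q 0 • Xt a p - q 1 • Yt a p - q 2 • Zt p = 0 := by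
    apply hinj
    rw [map_zero, map_sub, map_sub, map_smul, map_smul, map_smul, hX, hY, hZ]
    funext i
    fin_cases i <;>
      simp [Xf, Yf, Zf] <;> ring
  have k0 := congrFun key 0
  have k1 := congrFun key 1
  have k2 := congrFun key 2
  rw [hXt, hYt, hZt] at k0 k1 k2
  simp at k0 k1 k2
  have hq0 : q 0 = 0 := by
    rcases k0 with h | h
    · exact h
    · exact absurd h (ne_of_gt ha')
  have hq2 : q 2 = 0 := by
    rcases k1 with h | h
    · exact h
    · exact absurd h (ne_of_gt ht)
  have hq1 : q 1 = 0 := by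
    rcases k2 with h | h
    · exact h
    · exact absurd h (ne_of_gt ht)
  have hqz : q = 0 := by
    funext i
    fin_cases i <;> assumption
  have hLX : L (Xt a p) = 0 := by
    rw [hX, hqz]
    funext i
    fin_cases i <;> simp [Xf]
  have : Xt a p = 0 := hinj (by rw [hLX, map_zero])
  rw [hXt] at this
  have := congrFun this 0
  simp at this
  exact absurd this (ne_of_gt ha')
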